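/- arXiv:2101.01953 — 5 statements merged into one kernel-verified Lean document; each statement's English description precedes it below -/
import Mathlib

section
/- There exist a constant c > 0 and an integer n₀ such that for every n ≥ n₀, every balanced rectangle cover of the pseudo-Boolean constraint f_n has size at least 2^(c·n); that is, C(f_n) ≥ 2^(c·n). -/
/-- `g` depends only on the variables in `S`. -/
def DependsOnlyOn {X : Type*} (S : Finset X) (g : (X → Bool) → Bool) : Prop :=
  ∀ x y : X → Bool, (∀ v ∈ S, x v = y v) → g x = g y

/-- `r` is a rectangle with respect to the partition `(X1, X2)` of the variable set. -/
def IsRectangle {X : Type*} [Fintype X] [DecidableEq X] (X1 X2 : Finset X)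
    (r : (X → Bool) → Bool) : Prop :=
  X1 ∪ X2 = Finset.univ ∧ X1 ∩ X2 = ∅ ∧
    ∃ ρ1 ρ2 : (X → Bool) → Bool, DependsOnlyOn X1 ρ1 ∧ DependsOnlyOn X2 ρ2 ∧
      ∀ x, r x = (ρ1 x && ρ2 x)

/-- `r` is a rectangle with respect to some balanced partition. -/
def IsBalancedRectangle {X : Type*} [Fintype X] [DecidableEq X]
    (r : (X → Bool) → Bool) : Prop :=
  ∃ X1 X2 : Finset X, IsRectangle X1 X2 r ∧
    Fintype.card X ≤ 3 * X1.card ∧ 3 * X1.card ≤ 2 * Fintype.card X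

/-- A balanced rectangle cover of `f`: a finite list of balanced rectangles whose
disjunction is equivalent to `f`. -/
def IsBalancedRectangleCover {X : Type*} [Fintype X] [DecidableEq X]
    (L : List ((X → Bool) → Bool)) (f : (X → Bool) → Bool) : Prop :=
  (∀ r ∈ L, IsBalancedRectangle r) ∧
    ∀ x, f x = true ↔ ∃ r ∈ L, r x = true

/-- The weight of an assignment to the `n × n` grid of variables, where variable `(i,j)`
(`0`-indexed) has weight `2 ^ i + 2 ^ (n + j)`. -/
def pbWeight (n : ℕ) (x : Fin n × Fin n → Bool) : ℕ :=
  ∑ p : Fin n × Fin n, if x p = true then 2 ^ (p.1 : ℕ) + 2 ^ (n + (p.2 : ℕ)) else 0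

/-- The pseudo-Boolean constraint `f_n`. -/
def fPB (n : ℕ) (x : Fin n × Fin n → Bool) : Bool :=
  decide (2 ^ (2 * n) - 1 ≤ pbWeight n x)

/-!
Permutation matrices form a fooling set. The matrix of `σ` has one true entry in every row and
every column, so its weight is `∑ 2^i + ∑ 2^(n+j) = 2^(2n) - 1`. If a rectangle `r ≤ f_n` with
partition `(X1, X2)` accepts the matrices of `σ` and `τ`, it accepts both mixtures (one
permutation on `X1`, the other on `X2`); their weights add up to `2 (2^(2n) - 1)`, so each is
exactly `2^(2n) - 1`, and as their row and column counts are at most `2`, uniqueness of binary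
expansions makes them all `1`. Hence, with `A` the rows and `B` the columns in which the graph of
`τ` meets `X1`, every permutation accepted by `r` has its graph in
`A × B ∩ X1 ∪ Aᶜ × Bᶜ \ X1`, a set of at most `11 n² / 12` cells by balance. Then `s = n / 48`
rows leave at most `n - 2 s` choices each, `r` accepts at most `(n - s)! (n - 2 s)^s`
permutations, and comparing with `n!` yields `2^(s² / n)` rectangles.
-/

open Finset Nat

theorem Finset.card_filter_ite_eq {β : Type*} [Fintype β] [DecidableEq β] (c : β → Prop)
    [DecidablePred c] (u v : β) :
    #{j | if c j then j = u else j = v} = (if c u then 1 else 0) + (if c v then 0 else 1) := by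
  have : ({j | if c j then j = u else j = v} : Finset β) =
      filter c {u} ∪ filter (¬c ·) {v} := by
    ext j; by_cases c j <;> aesop
  rw [this, card_union_of_disjoint (disjoint_filter_filter_not _ _ _), filter_singleton,
    filter_singleton]
  split_ifs <;> simp

theorem sum_mul_two_pow_eq_two_pow_sub_one_iff {m : ℕ} {d : Fin m → ℕ} (hd : ∀ i, d i ≤ 2) :
    ∑ i, d i * 2 ^ (i : ℕ) = 2 ^ m - 1 ↔ ∀ i, d i = 1 := by
  induction m with
  | zero => simp
  | succ m ih =>
    have h0 := hd 0
    have hpos : 1 ≤ 2 ^ m := Nat.one_le_two_pow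
    rw [Fin.sum_univ_succ, Fin.forall_fin_succ, ← ih fun i => hd i.succ]
    simp only [Fin.val_zero, pow_zero, mul_one, Fin.val_succ, pow_succ, ← mul_assoc,
      ← Finset.sum_mul]
    omega

variable {α : Type*} [Fintype α] [DecidableEq α]

theorem Finset.card_eq_sum_card_filter_prodMk {β : Type*} [Fintype β] [DecidableEq β]
    (X : Finset (α × β)) : #X = ∑ a, #{b | (a, b) ∈ X} := by
  calc #X = ∑ p : α × β, if p ∈ X then 1 else 0 := by simp
    _ = ∑ a, #{b | (a, b) ∈ X} := by rw [Fintype.sum_prod_type]; simp only [sum_boole]; rfl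

theorem card_product_inter_union_sdiff_le (X : Finset (α × α)) {A B : Finset α}
    (hAB : #A = #B) (hX : Fintype.card α ^ 2 ≤ 3 * #X) (hX' : 3 * #X ≤ 2 * Fintype.card α ^ 2) :
    12 * #(A ×ˢ B ∩ X ∪ (Aᶜ ×ˢ Bᶜ) \ X) ≤ 11 * Fintype.card α ^ 2 := by
  set N := Fintype.card α
  have hXc : #Xᶜ = N ^ 2 - #X := by rw [card_compl, Fintype.card_prod, sq]
  have hin : #(A ×ˢ B ∩ X) ≤ #A * #A := by
    calc #(A ×ˢ B ∩ X) ≤ #(A ×ˢ B) := card_le_card inter_subset_left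
      _ = #A * #A := by rw [card_product, hAB]
  have hin' : #(A ×ˢ B ∩ X) ≤ #X := card_le_card inter_subset_right
  have hout : #((Aᶜ ×ˢ Bᶜ) \ X) ≤ (N - #A) * (N - #A) := by
    calc #((Aᶜ ×ˢ Bᶜ) \ X) ≤ #(Aᶜ ×ˢ Bᶜ) := card_le_card sdiff_subset
      _ = (N - #A) * (N - #A) := by rw [card_product, card_compl, card_compl, hAB]
  have hout' : #((Aᶜ ×ˢ Bᶜ) \ X) ≤ N ^ 2 - #X :=
    hXc ▸ card_le_card fun p hp => mem_compl.2 (mem_sdiff.1 hp).2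
  have hA : #A ≤ N := card_le_univ A
  refine (Nat.mul_le_mul_left 12 (card_union_le _ _)).trans ?_
  rcases le_total (2 * #A) N with h | h
  · have : 4 * (#A * #A) ≤ N ^ 2 := by nlinarith
    omega
  · have : 4 * ((N - #A) * (N - #A)) ≤ N ^ 2 := by
      have : 2 * (N - #A) ≤ N := by omega
      nlinarith
    omega

theorem exists_card_eq_forall_card_filter_add_le (S : Finset (α × α)) {s : ℕ}
    (hs : 48 * s ≤ Fintype.card α) (hS : 12 * #S ≤ 11 * Fintype.card α ^ 2) :
    ∃ T : Finset α, #T = s ∧ ∀ i ∈ T, #{j | (i, j) ∈ S} + 2 * s ≤ Fintype.card α := by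
  set N := Fintype.card α
  set narrow : Finset α := {i | #{j | (i, j) ∈ S} + 2 * s ≤ N}
  suffices h : s ≤ #narrow by
    obtain ⟨T, hTn, hT⟩ := exists_subset_card_eq h
    exact ⟨T, hT, fun i hi => (mem_filter.1 (hTn hi)).2⟩
  by_contra! h
  have hwide : #narrowᶜ * (N + 1 - 2 * s) ≤ #S := by
    rw [card_eq_sum_card_filter_prodMk S, ← sum_add_sum_compl narrow, ← smul_eq_mul,
      ← sum_const]
    refine le_add_left (sum_le_sum fun i hi => ?_)
    simp only [narrow, mem_compl, mem_filter, mem_univ, true_and] at hi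
    omega
  have hc : #narrowᶜ + #narrow = N := by rw [card_compl]; have := card_le_univ narrow; omega
  set t := N + 1 - 2 * s
  have ht : 23 * N + 24 ≤ 24 * t := by omega
  have htw : t * t ≤ #narrowᶜ * t := Nat.mul_le_mul_right t (by omega)
  nlinarith [Nat.mul_le_mul ht ht]

namespace Equiv.Perm

theorem card_filter_forall_mem_apply_eq_self (T : Finset α) :
    #{ρ : Perm α | ∀ a ∈ T, ρ a = a} = (Fintype.card α - #T)! := by
  rw [← Fintype.card_subtype, ← Fintype.card_coe T, ← Fintype.card_subtype_compl,
    ← Fintype.card_perm]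
  exact Fintype.card_congr <| ((Perm.subtypeEquivSubtypePerm (· ∉ T)).trans
    (Equiv.subtypeEquivRight fun ρ => by simp)).symm

theorem card_filter_forall_mem_apply_mem_le (T : Finset α) (F : α → Finset α) :
    #{σ : Perm α | ∀ i ∈ T, σ i ∈ F i} ≤ (Fintype.card α - #T)! * ∏ i ∈ T, #(F i) := by
  set P : Finset (Perm α) := {σ | ∀ i ∈ T, σ i ∈ F i}
  have hmaps : ∀ σ ∈ P, (fun i : T => σ i) ∈ Fintype.piFinset fun i : T => F i := by
    intro σ hσ
    simp_all [P, Fintype.mem_piFinset]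
  rw [← Finset.prod_coe_sort T fun i => #(F i), ← Fintype.card_piFinset]
  refine card_le_mul_card_image_of_maps_to hmaps _ fun g _ => ?_
  obtain he | ⟨σ₀, hσ₀⟩ := eq_empty_or_nonempty {σ ∈ P | (fun i : T => σ i) = g}
  · simp [he]
  rw [← card_filter_forall_mem_apply_eq_self T]
  refine card_le_card_of_injOn (σ₀⁻¹ * ·) (fun σ hσ => ?_) fun σ _ τ _ h => mul_left_cancel h
  simp only [coe_filter, mem_univ, true_and, mem_filter] at hσ hσ₀ ⊢
  intro a ha
  have := congrFun (hσ.2.trans hσ₀.2.symm) ⟨a, ha⟩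
  simp [this]

theorem card_filter_forall_mk_apply_mem_le (S : Finset (α × α)) {s : ℕ}
    (hs : 48 * s ≤ Fintype.card α) (hS : 12 * #S ≤ 11 * Fintype.card α ^ 2) :
    #{σ : Perm α | ∀ i, (i, σ i) ∈ S} ≤
      (Fintype.card α - s)! * (Fintype.card α - 2 * s) ^ s := by
  obtain ⟨T, rfl, hT⟩ := exists_card_eq_forall_card_filter_add_le S hs hS
  calc #{σ : Perm α | ∀ i, (i, σ i) ∈ S}
      ≤ #{σ : Perm α | ∀ i ∈ T, σ i ∈ ({j | (i, j) ∈ S} : Finset α)} :=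
        card_le_card fun σ hσ => by simp_all
    _ ≤ (Fintype.card α - #T)! * ∏ i ∈ T, #({j | (i, j) ∈ S} : Finset α) :=
        card_filter_forall_mem_apply_mem_le T _
    _ ≤ (Fintype.card α - #T)! * (Fintype.card α - 2 * #T) ^ #T := by
        rw [← prod_const]
        gcongr with i hi
        have := hT i hi
        omega

end Equiv.Perm

theorem card_le_length_mul {ι : Type*} [Fintype ι] (L : List (ι → Bool))
    (hL : ∀ a, ∃ r ∈ L, r a = true) {M : ℕ} (hM : ∀ r ∈ L, #{a | r a = true} ≤ M) :
    Fintype.card ι ≤ L.length * M := by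
  classical
  calc Fintype.card ι ≤ #(L.toFinset.biUnion fun r => {a | r a = true}) :=
        card_le_card fun a _ => by simpa using hL a
    _ ≤ #L.toFinset * M := card_biUnion_le_card_mul _ _ _ fun r hr => hM r (by simpa using hr)
    _ ≤ L.length * M := Nat.mul_le_mul_right _ (List.toFinset_card_le L)

theorem two_rpow_sq_div_le {n s ℓ : ℕ} (hs : 2 * s < n)
    (h : (n - s) ^ s ≤ ℓ * (n - 2 * s) ^ s) : (2 : ℝ) ^ ((s : ℝ) ^ 2 / n) ≤ ℓ := by
  have hn : (0 : ℝ) < n := by exact_mod_cast (by omega : 0 < n)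
  have hsn : (2 * s : ℝ) < n := by exact_mod_cast hs
  have hbern : (2 : ℝ) ^ ((s : ℝ) / n) ≤ 1 + s / n := by
    have := rpow_one_add_le_one_add_mul_self (s := 1) (by norm_num) (p := s / n)
      (by positivity) ((div_le_one hn).2 (by linarith))
    norm_num at this
    linarith
  have hfactor : (2 : ℝ) ^ ((s : ℝ) / n) * (n - 2 * s) ≤ n - s := by
    calc (2 : ℝ) ^ ((s : ℝ) / n) * (n - 2 * s) ≤ (1 + s / n) * (n - 2 * s) :=
          mul_le_mul_of_nonneg_right hbern (by linarith)
      _ = n - s - 2 * s ^ 2 / n := by field_simp; ring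
      _ ≤ n - s := by have : 0 ≤ 2 * (s : ℝ) ^ 2 / n := by positivity
                      linarith
  have hcast : ((n - s) ^ s : ℝ) ≤ ℓ * (n - 2 * s) ^ s := by
    have := (Nat.cast_le (α := ℝ)).2 h
    push_cast [Nat.cast_sub (by omega : s ≤ n), Nat.cast_sub hs.le] at this
    exact this
  have hpos : (0 : ℝ) < (n - 2 * s) ^ s := pow_pos (by linarith) s
  refine le_of_mul_le_mul_right ?_ hpos
  calc (2 : ℝ) ^ ((s : ℝ) ^ 2 / n) * (n - 2 * s) ^ s
      = ((2 : ℝ) ^ ((s : ℝ) / n) * (n - 2 * s)) ^ s := by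
        rw [mul_pow, ← Real.rpow_mul_natCast zero_le_two]; ring_nf
    _ ≤ (n - s) ^ s := pow_le_pow_left₀ (by positivity) hfactor s
    _ ≤ ℓ * (n - 2 * s) ^ s := hcast

theorem IsRectangle.piecewise_eq_true {X : Type*} [Fintype X] [DecidableEq X] {X1 X2 : Finset X}
    {r : (X → Bool) → Bool} (hr : IsRectangle X1 X2 r) {x y : X → Bool} (hx : r x = true)
    (hy : r y = true) : r (X1.piecewise x y) = true := by
  obtain ⟨-, hdisj, ρ1, ρ2, hρ1, hρ2, hr⟩ := hr
  rw [hr, Bool.and_eq_true] at hx hy ⊢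
  rw [hρ1 _ x fun v hv => piecewise_eq_of_mem _ _ _ hv,
    hρ2 _ y fun v hv => piecewise_eq_of_notMem _ _ _
      ((disjoint_iff_inter_eq_empty.2 hdisj).symm.notMem_of_mem_left_finset hv)]
  exact ⟨hx.1, hy.2⟩

variable {n : ℕ}

theorem pbWeight_piecewise_add_pbWeight_piecewise (X1 : Finset (Fin n × Fin n))
    (x y : Fin n × Fin n → Bool) :
    pbWeight n (X1.piecewise x y) + pbWeight n (X1.piecewise y x) =
      pbWeight n x + pbWeight n y := by
  simp only [pbWeight, ← sum_add_distrib]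
  refine sum_congr rfl fun p _ => ?_
  by_cases hp : p ∈ X1 <;> simp [hp, add_comm]

def lineCounts (z : Fin n × Fin n → Bool) : Fin (n + n) → ℕ :=
  Fin.append (fun i => #{j | z (i, j) = true}) fun j => #{i | z (i, j) = true}

theorem pbWeight_eq_sum_lineCounts (z : Fin n × Fin n → Bool) :
    pbWeight n z = ∑ k, lineCounts z k * 2 ^ (k : ℕ) := by
  have hsplit : ∀ p : Fin n × Fin n,
      (if z p = true then 2 ^ (p.1 : ℕ) + 2 ^ (n + (p.2 : ℕ)) else 0) =
        (if z p = true then 2 ^ (p.1 : ℕ) else 0) +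
          (if z p = true then 2 ^ (n + (p.2 : ℕ)) else 0) :=
    fun p => by split_ifs <;> simp
  simp only [pbWeight, hsplit, sum_add_distrib, Fin.sum_univ_add, lineCounts, Fin.append_left,
    Fin.append_right, Fin.val_castAdd, Fin.val_natAdd]
  rw [Fintype.sum_prod_type, Fintype.sum_prod_type_right]
  simp only [← sum_filter, sum_const, smul_eq_mul]

theorem pbWeight_eq_iff {z : Fin n × Fin n → Bool} (hz : ∀ k, lineCounts z k ≤ 2) :
    pbWeight n z = 2 ^ (2 * n) - 1 ↔ ∀ k, lineCounts z k = 1 := by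
  rw [pbWeight_eq_sum_lineCounts, two_mul]
  exact sum_mul_two_pow_eq_two_pow_sub_one_iff hz

def permAssignment (σ : Equiv.Perm (Fin n)) : Fin n × Fin n → Bool :=
  fun p => decide (σ p.1 = p.2)

theorem pbWeight_permAssignment (σ : Equiv.Perm (Fin n)) :
    pbWeight n (permAssignment σ) = 2 ^ (2 * n) - 1 := by
  have h : ∀ k, lineCounts (permAssignment σ) k = 1 := by
    refine Fin.addCases (fun i => ?_) fun j => ?_
    · rw [lineCounts, Fin.append_left]
      simp [permAssignment, filter_eq]
    · rw [lineCounts, Fin.append_right]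
      simp [permAssignment, ← Equiv.eq_symm_apply, filter_eq']
  exact (pbWeight_eq_iff fun k => (h k).trans_le one_le_two).2 h

theorem lineCounts_piecewise_castAdd (X1 : Finset (Fin n × Fin n)) (σ τ : Equiv.Perm (Fin n))
    (i : Fin n) :
    lineCounts (X1.piecewise (permAssignment σ) (permAssignment τ)) (Fin.castAdd n i) =
      (if (i, σ i) ∈ X1 then 1 else 0) + (if (i, τ i) ∈ X1 then 0 else 1) := by
  rw [lineCounts, Fin.append_left, ← card_filter_ite_eq (fun j => (i, j) ∈ X1)]
  congr 1
  refine filter_congr fun j _ => ?_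
  by_cases h : (i, j) ∈ X1 <;> simp [h, permAssignment, eq_comm]

theorem lineCounts_piecewise_natAdd (X1 : Finset (Fin n × Fin n)) (σ τ : Equiv.Perm (Fin n))
    (j : Fin n) :
    lineCounts (X1.piecewise (permAssignment σ) (permAssignment τ)) (Fin.natAdd n j) =
      (if (σ.symm j, j) ∈ X1 then 1 else 0) + (if (τ.symm j, j) ∈ X1 then 0 else 1) := by
  rw [lineCounts, Fin.append_right, ← card_filter_ite_eq (fun i => (i, j) ∈ X1)]
  congr 1
  refine filter_congr fun i _ => ?_
  by_cases h : (i, j) ∈ X1 <;> simp [h, permAssignment, ← Equiv.eq_symm_apply]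

theorem lineCounts_piecewise_le_two (X1 : Finset (Fin n × Fin n)) (σ τ : Equiv.Perm (Fin n))
    (k : Fin (n + n)) :
    lineCounts (X1.piecewise (permAssignment σ) (permAssignment τ)) k ≤ 2 := by
  refine Fin.addCases (fun i => ?_) (fun j => ?_) k
  · rw [lineCounts_piecewise_castAdd]; split_ifs <;> simp
  · rw [lineCounts_piecewise_natAdd]; split_ifs <;> simp

theorem IsRectangle.mem_iff_of_permAssignment {X1 X2 : Finset (Fin n × Fin n)}
    {r : (Fin n × Fin n → Bool) → Bool} (hr : IsRectangle X1 X2 r)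
    (hf : ∀ x, r x = true → fPB n x = true) {σ τ : Equiv.Perm (Fin n)}
    (hσ : r (permAssignment σ) = true) (hτ : r (permAssignment τ) = true) :
    (∀ i, (i, σ i) ∈ X1 ↔ (i, τ i) ∈ X1) ∧ ∀ j, (σ.symm j, j) ∈ X1 ↔ (τ.symm j, j) ∈ X1 := by
  have hW : ∀ x, r x = true → 2 ^ (2 * n) - 1 ≤ pbWeight n x := fun x hx => by
    simpa [fPB] using hf x hx
  have h₁ := hW _ (hr.piecewise_eq_true hσ hτ)
  have h₂ := hW _ (hr.piecewise_eq_true hτ hσ)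
  have hsum := pbWeight_piecewise_add_pbWeight_piecewise X1 (permAssignment σ) (permAssignment τ)
  rw [pbWeight_permAssignment, pbWeight_permAssignment] at hsum
  have hdigits := (pbWeight_eq_iff (lineCounts_piecewise_le_two X1 σ τ)).1 (by omega)
  refine ⟨fun i => ?_, fun j => ?_⟩
  · have := hdigits (Fin.castAdd n i)
    rw [lineCounts_piecewise_castAdd] at this
    split_ifs at this <;> simp_all
  · have := hdigits (Fin.natAdd n j)
    rw [lineCounts_piecewise_natAdd] at this
    split_ifs at this <;> simp_all

theorem card_filter_permAssignment_le {r : (Fin n × Fin n → Bool) → Bool}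
    (hr : IsBalancedRectangle r) (hf : ∀ x, r x = true → fPB n x = true) {s : ℕ}
    (hs : 48 * s ≤ n) :
    #{σ : Equiv.Perm (Fin n) | r (permAssignment σ) = true} ≤ (n - s)! * (n - 2 * s) ^ s := by
  obtain he | ⟨τ, hτ⟩ :=
    eq_empty_or_nonempty {σ : Equiv.Perm (Fin n) | r (permAssignment σ) = true}
  · simp [he]
  obtain ⟨X1, X2, hrect, hX, hX'⟩ := hr
  rw [mem_filter] at hτ
  set A : Finset (Fin n) := {i | (i, τ i) ∈ X1}
  set B := A.map τ.toEmbedding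
  have hsub : ({σ | r (permAssignment σ) = true} : Finset (Equiv.Perm (Fin n))) ⊆
      ({σ | ∀ i, (i, σ i) ∈ A ×ˢ B ∩ X1 ∪ (Aᶜ ×ˢ Bᶜ) \ X1} :
        Finset (Equiv.Perm (Fin n))) := by
    intro σ hσ
    rw [mem_filter] at hσ ⊢
    obtain ⟨hrow, hcol⟩ := hrect.mem_iff_of_permAssignment hf hσ.2 hτ.2
    refine ⟨mem_univ _, fun i => ?_⟩
    have hA : i ∈ A ↔ (i, σ i) ∈ X1 := by simp [A, hrow]
    have hB : σ i ∈ B ↔ (i, σ i) ∈ X1 := by simpa [B, A] using (hcol (σ i)).symm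
    simp only [mem_union, mem_inter, mem_product, mem_sdiff, mem_compl, hA, hB]
    tauto
  have hN : Fintype.card (Fin n × Fin n) = Fintype.card (Fin n) ^ 2 := by
    rw [Fintype.card_prod, sq]
  refine (card_le_card hsub).trans ?_
  simpa using Equiv.Perm.card_filter_forall_mk_apply_mem_le _ (by simpa using hs)
    (card_product_inter_union_sdiff_le X1 (A := A) (B := B) (card_map _).symm (hN ▸ hX)
      (hN ▸ hX'))

theorem stmt0 :
    ∃ c : ℝ, 0 < c ∧ ∃ n₀ : ℕ, ∀ n : ℕ, n₀ ≤ n →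
      ∀ L : List ((Fin n × Fin n → Bool) → Bool),
        IsBalancedRectangleCover L (fPB n) →
        (2 : ℝ) ^ (c * n) ≤ L.length := by
  refine ⟨1 / 9216, by norm_num, 96, fun n hn L ⟨hbal, hcov⟩ => ?_⟩
  set s := n / 48
  have hcover : n ! ≤ L.length * ((n - s)! * (n - 2 * s) ^ s) := by
    have := card_le_length_mul (L.map fun r σ => r (permAssignment σ))
      (fun σ => by simpa [pbWeight_permAssignment, fPB] using (hcov (permAssignment σ)).1)
      (M := (n - s)! * (n - 2 * s) ^ s) fun _ hmem => by
        obtain ⟨r, hr, rfl⟩ := List.mem_map.1 hmem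
        exact card_filter_permAssignment_le (hbal r hr) (fun x hx => (hcov x).2 ⟨r, hr, hx⟩)
          (by omega)
    rwa [Fintype.card_perm, Fintype.card_fin, List.length_map] at this
  have hfact : (n - s)! * (n - s) ^ s ≤ n ! := by
    rw [← Nat.factorial_mul_descFactorial (by omega : s ≤ n)]
    exact Nat.mul_le_mul_left _
      ((Nat.pow_le_pow_left (by omega) s).trans (Nat.pow_sub_le_descFactorial n s))
  have hpow : (n - s) ^ s ≤ L.length * (n - 2 * s) ^ s := by
    have := hfact.trans hcover
    rw [mul_left_comm] at this
    exact Nat.le_of_mul_le_mul_left this (Nat.factorial_pos (n - s))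
  calc (2 : ℝ) ^ (1 / 9216 * (n : ℝ)) ≤ 2 ^ ((s : ℝ) ^ 2 / n) := by
        refine Real.rpow_le_rpow_of_exponent_le one_le_two ?_
        have : (n : ℝ) ≤ 96 * s := by exact_mod_cast (by omega : n ≤ 96 * s)
        rw [le_div_iff₀ (by positivity)]
        nlinarith
    _ ≤ L.length := two_rpow_sq_div_le (by omega) hpow
end

section
/- Let f be a pseudo-Boolean constraint on a finite variable set X with positive integer weights and threshold θ, and let f* be the Boolean function on X whose models are exactly the threshold models of f. Then C(f) ≥ C(f*): the minimum size of a balanced rectangle cover of f is at least the minimum size of a balanced rectangle cover of f*. -/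
/-
Restricting a rectangle cover of `f` to the threshold models gives a cover of `f*` of the
same size, provided each restricted rectangle is again a rectangle for the same partition.
For a rectangle `ρ₁ ∧ ρ₂` all of whose models have weight at least `θ`, any two threshold
models `x, y` carry the same weight on `X₁`: the model that follows `x` on `X₁` and `y` on
`X₂` has weight `w₁ x + w₂ y ≥ θ = w₁ y + w₂ y`, and symmetrically. Hence the threshold
models are exactly the models with `w₁ = c₁` and `w₂ = c₂` for fixed constants, a condition
that splits along the partition.
-/

open Finset

variable {X : Type*}

def weightOn (w : X → ℕ) (S : Finset X) (x : X → Bool) : ℕ :=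
  ∑ i ∈ S, if x i = true then w i else 0

theorem weightOn_congr (w : X → ℕ) {S : Finset X} {x y : X → Bool}
    (h : ∀ v ∈ S, x v = y v) : weightOn w S x = weightOn w S y :=
  Finset.sum_congr rfl fun i hi => by rw [h i hi]

theorem weightOn_univ_eq_add [Fintype X] [DecidableEq X] (w : X → ℕ) {X1 X2 : Finset X}
    (hun : X1 ∪ X2 = univ) (hint : X1 ∩ X2 = ∅) (x : X → Bool) :
    weightOn w univ x = weightOn w X1 x + weightOn w X2 x := by
  rw [weightOn, ← hun, Finset.sum_union (Finset.disjoint_iff_inter_eq_empty.mpr hint)]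
  rfl

theorem DependsOnlyOn.and {S : Finset X} {g h : (X → Bool) → Bool}
    (hg : DependsOnlyOn S g) (hh : DependsOnlyOn S h) :
    DependsOnlyOn S fun x => g x && h x := fun x y hxy =>
  congrArg₂ _ (hg x y hxy) (hh x y hxy)

theorem dependsOnlyOn_weightOn_eq (w : X → ℕ) (S : Finset X) (c : ℕ) :
    DependsOnlyOn S fun x => decide (weightOn w S x = c) := fun x y hxy => by
  simp only [weightOn_congr w hxy]

namespace IsRectangle

variable [Fintype X] [DecidableEq X] {X1 X2 : Finset X} {r : (X → Bool) → Bool}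

theorem of_iff (hun : X1 ∪ X2 = univ) (hint : X1 ∩ X2 = ∅) {ρ1 ρ2 : (X → Bool) → Bool}
    (h1 : DependsOnlyOn X1 ρ1) (h2 : DependsOnlyOn X2 ρ2)
    (hr : ∀ x, r x = true ↔ ρ1 x = true ∧ ρ2 x = true) : IsRectangle X1 X2 r :=
  ⟨hun, hint, ρ1, ρ2, h1, h2, fun x => by rw [Bool.eq_iff_iff, hr x, Bool.and_eq_true]⟩

theorem exists_mix (hr : IsRectangle X1 X2 r) {x y : X → Bool} (hx : r x = true)
    (hy : r y = true) :
    ∃ z, r z = true ∧ (∀ v ∈ X1, z v = x v) ∧ ∀ v ∈ X2, z v = y v := by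
  obtain ⟨-, hint, ρ1, ρ2, h1, h2, hrx⟩ := hr
  let z : X → Bool := fun v => if v ∈ X1 then x v else y v
  have hz1 : ∀ v ∈ X1, z v = x v := fun v hv => if_pos hv
  have hz2 : ∀ v ∈ X2, z v = y v := fun v hv =>
    if_neg fun hv1 => (disjoint_iff_inter_eq_empty.mpr hint).notMem_of_mem_left_finset hv1 hv
  rw [hrx, Bool.and_eq_true] at hx hy
  refine ⟨z, ?_, hz1, hz2⟩
  rw [hrx, h1 z x hz1, h2 z y hz2, hx.1, hy.2, Bool.and_self]

variable (w : X → ℕ) (θ : ℕ)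

theorem weightOn_le_of_weightOn_univ_eq (hr : IsRectangle X1 X2 r)
    (hmin : ∀ x, r x = true → θ ≤ weightOn w univ x) {x y : X → Bool} (hx : r x = true)
    (hy : r y = true) (hyθ : weightOn w univ y = θ) : weightOn w X1 y ≤ weightOn w X1 x := by
  obtain ⟨z, hz, hz1, hz2⟩ := hr.exists_mix hx hy
  have hzθ := hmin z hz
  rw [weightOn_univ_eq_add w hr.1 hr.2.1, weightOn_congr w hz1, weightOn_congr w hz2] at hzθ
  rw [weightOn_univ_eq_add w hr.1 hr.2.1] at hyθ
  omega

theorem and_weightOn_univ_eq (hr : IsRectangle X1 X2 r)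
    (hmin : ∀ x, r x = true → θ ≤ weightOn w univ x) :
    IsRectangle X1 X2 fun x => r x && decide (weightOn w univ x = θ) := by
  have hsplit := weightOn_univ_eq_add w hr.1 hr.2.1
  by_cases hthr : ∃ x0, r x0 = true ∧ weightOn w univ x0 = θ
  · obtain ⟨x0, hx0, hx0θ⟩ := hthr
    obtain ⟨hun, hint, ρ1, ρ2, h1, h2, hrx⟩ := id hr
    refine of_iff hun hint (h1.and (dependsOnlyOn_weightOn_eq w X1 (weightOn w X1 x0)))
      (h2.and (dependsOnlyOn_weightOn_eq w X2 (weightOn w X2 x0))) fun x => ?_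
    have hr_iff : r x = true ↔ ρ1 x = true ∧ ρ2 x = true := by rw [hrx, Bool.and_eq_true]
    simp only [Bool.and_eq_true, decide_eq_true_eq]
    constructor
    · rintro ⟨hx, hxθ⟩
      have hle := hr.weightOn_le_of_weightOn_univ_eq w θ hmin hx hx0 hx0θ
      have hge := hr.weightOn_le_of_weightOn_univ_eq w θ hmin hx0 hx hxθ
      have := hsplit x
      have := hsplit x0
      exact ⟨⟨(hr_iff.mp hx).1, by omega⟩, (hr_iff.mp hx).2, by omega⟩
    · rintro ⟨⟨hρ1, hx1⟩, hρ2, hx2⟩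
      exact ⟨hr_iff.mpr ⟨hρ1, hρ2⟩, by rw [hsplit, hx1, hx2, ← hsplit, hx0θ]⟩
  · refine of_iff (ρ1 := fun _ => false) (ρ2 := fun _ => false) hr.1 hr.2.1
      (fun _ _ _ => rfl) (fun _ _ _ => rfl) fun x => ?_
    simpa using fun hx => hthr ⟨x, hx⟩

end IsRectangle

theorem IsBalancedRectangle.and_weightOn_univ_eq [Fintype X] [DecidableEq X]
    {r : (X → Bool) → Bool} (hr : IsBalancedRectangle r) (w : X → ℕ) (θ : ℕ)
    (hmin : ∀ x, r x = true → θ ≤ weightOn w univ x) :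
    IsBalancedRectangle fun x => r x && decide (weightOn w univ x = θ) :=
  let ⟨X1, X2, hrect, hbal⟩ := hr
  ⟨X1, X2, hrect.and_weightOn_univ_eq w θ hmin, hbal⟩

theorem stmt2_general (m : ℕ) (w : Fin m → ℕ) (θ : ℕ)
    (f fstar : (Fin m → Bool) → Bool)
    (hf : ∀ x, f x = true ↔ θ ≤ ∑ i, if x i = true then w i else 0)
    (hfstar : ∀ x, fstar x = true ↔ (∑ i, if x i = true then w i else 0) = θ)
    (L : List ((Fin m → Bool) → Bool)) (hL : IsBalancedRectangleCover L f) :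
    ∃ L' : List ((Fin m → Bool) → Bool),
      IsBalancedRectangleCover L' fstar ∧ L'.length ≤ L.length := by
  obtain ⟨hrect, hcov⟩ := hL
  have hmin : ∀ r ∈ L, ∀ x, r x = true → θ ≤ weightOn w univ x := fun r hr x hx =>
    (hf x).mp ((hcov x).mpr ⟨r, hr, hx⟩)
  refine ⟨L.map fun r x => r x && decide (weightOn w univ x = θ), ⟨?_, fun x => ?_⟩,
    (L.length_map _).le⟩
  · simpa using fun r hr => (hrect r hr).and_weightOn_univ_eq w θ (hmin r hr)
  · simp only [List.mem_map, exists_exists_and_eq_and, Bool.and_eq_true, decide_eq_true_eq,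
      hfstar x]
    exact ⟨fun hxθ => ((hcov x).mp ((hf x).mpr hxθ.ge)).imp fun _ ⟨hr, hx⟩ => ⟨hr, hx, hxθ⟩,
      fun ⟨_, _, _, hxθ⟩ => hxθ⟩

theorem stmt2 (m : ℕ) (w : Fin m → ℕ) (θ : ℕ) (hw : ∀ i, 0 < w i) (hθ : 0 < θ)
    (f fstar : (Fin m → Bool) → Bool)
    (hf : ∀ x, f x = true ↔ θ ≤ ∑ i, if x i = true then w i else 0)
    (hfstar : ∀ x, fstar x = true ↔ (∑ i, if x i = true then w i else 0) = θ)
    (L : List ((Fin m → Bool) → Bool)) (hL : IsBalancedRectangleCover L f) :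
    ∃ L' : List ((Fin m → Bool) → Bool),
      IsBalancedRectangleCover L' fstar ∧ L'.length ≤ L.length :=
  stmt2_general m w θ f fstar hf hfstar L hL
end

section
/- Let f be a pseudo-Boolean constraint on a finite variable set X with positive integer weights and threshold θ. Let r be a rectangle with respect to a partition (X1, X2) of X such that every model of r is a model of f. Then there exists a rectangle r* with respect to the same partition (X1, X2) whose models are exactly the threshold models of f that are accepted by r. -/
/-!
Write the weight of `x` as `w₁(x) + w₂(x)`, the parts on `X1` and `X2`. If `x` and `y` are
threshold models accepted by the rectangle `r`, then so are the two crossed assignments (`x` on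
`X1`, `y` on `X2`, and vice versa), which are therefore models of the constraint:
`θ ≤ w₁(x) + w₂(y)` and `θ ≤ w₁(y) + w₂(x)`. Together with `w₁(x) + w₂(x) = θ = w₁(y) + w₂(y)`
this forces `w₁(x) = w₁(y)` and `w₂(x) = w₂(y)`. Hence, fixing one threshold model `x₀` of `r`,
the threshold models of `r` are the models of the rectangle
`(ρ₁ ∧ w₁ = w₁(x₀)) ∧ (ρ₂ ∧ w₂ = w₂(x₀))`; if there is none, the empty rectangle works.
-/

open Finset

variable {X : Type*} {M : Type*}

lemma dependsOnlyOn_iff_dependsOn {S : Finset X} {g : (X → Bool) → Bool} :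
    DependsOnlyOn S g ↔ DependsOn g (S : Set X) :=
  Iff.rfl

lemma dependsOn_sum [AddCommMonoid M] (S : Finset X) (f : X → Bool → M) :
    DependsOn (fun x => ∑ i ∈ S, f i (x i)) (S : Set X) :=
  fun _ _ h => sum_congr rfl fun i hi => by rw [h i hi]

namespace DependsOn

variable {α : X → Type*} {β γ : Type*} {S T : Finset X} {g : (∀ i, α i) → β}

lemma comp (hg : DependsOn g (S : Set X)) (p : β → γ) : DependsOn (p ∘ g) (S : Set X) :=
  fun _ _ h => congrArg p (hg h)

lemma piecewise_eq_left [DecidableEq X] (hg : DependsOn g (S : Set X)) (x y : ∀ i, α i) :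
    g (S.piecewise x y) = g x :=
  hg fun _ hv => piecewise_eq_of_mem _ _ _ hv

lemma piecewise_eq_right [DecidableEq X] (hg : DependsOn g (T : Set X)) (hST : Disjoint S T)
    (x y : ∀ i, α i) : g (S.piecewise x y) = g y :=
  hg fun _ hv => piecewise_eq_of_notMem _ _ _ (disjoint_right.mp hST hv)

end DependsOn

lemma eq_of_add_eq_of_le_add_swap [AddCommMonoid M] [PartialOrder M]
    [IsOrderedCancelAddMonoid M] {a₁ a₂ b₁ b₂ θ : M} (ha : a₁ + a₂ = θ) (hb : b₁ + b₂ = θ)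
    (hab : θ ≤ a₁ + b₂) (hba : θ ≤ b₁ + a₂) : a₁ = b₁ :=
  le_antisymm (le_of_add_le_add_right (ha ▸ hba)) (le_of_add_le_add_right (hb ▸ hab))

namespace IsRectangle

variable [Fintype X] [DecidableEq X] {X1 X2 : Finset X} {r : (X → Bool) → Bool}

lemma disjoint (hr : IsRectangle X1 X2 r) : Disjoint X1 X2 :=
  disjoint_iff_inter_eq_empty.mpr hr.2.1

lemma sum_univ_eq_add [AddCommMonoid M] (hr : IsRectangle X1 X2 r) (f : X → M) :
    ∑ i, f i = ∑ i ∈ X1, f i + ∑ i ∈ X2, f i := by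
  rw [← sum_union hr.disjoint, hr.1]

lemma and_dependsOn (hr : IsRectangle X1 X2 r) {g₁ g₂ : (X → Bool) → Bool}
    (hg₁ : DependsOn g₁ (X1 : Set X)) (hg₂ : DependsOn g₂ (X2 : Set X)) :
    IsRectangle X1 X2 fun x => (r x && g₁ x) && g₂ x := by
  obtain ⟨hu, hi, ρ₁, ρ₂, hρ₁, hρ₂, hr⟩ := hr
  refine ⟨hu, hi, fun x => ρ₁ x && g₁ x, fun x => ρ₂ x && g₂ x,
    fun x y h => congrArg₂ (· && ·) (hρ₁ x y h) (hg₁ h),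
    fun x y h => congrArg₂ (· && ·) (hρ₂ x y h) (hg₂ h), fun x => ?_⟩
  dsimp only
  rw [hr]
  ac_rfl

lemma piecewise_eq_true_s4 (hr : IsRectangle X1 X2 r) {x y : X → Bool} (hx : r x = true)
    (hy : r y = true) : r (X1.piecewise x y) = true := by
  have hdisj := hr.disjoint
  obtain ⟨-, -, ρ₁, ρ₂, hρ₁, hρ₂, hr⟩ := hr
  rw [hr] at hx hy ⊢
  rw [(dependsOnlyOn_iff_dependsOn.mp hρ₁).piecewise_eq_left,
    (dependsOnlyOn_iff_dependsOn.mp hρ₂).piecewise_eq_right hdisj]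
  simp_all

lemma le_add_of_forall_le [Add M] [LE M] {φ₁ φ₂ : (X → Bool) → M} {θ : M}
    (hr : IsRectangle X1 X2 r) (hφ₁ : DependsOn φ₁ (X1 : Set X))
    (hφ₂ : DependsOn φ₂ (X2 : Set X)) (hmodels : ∀ x, r x = true → θ ≤ φ₁ x + φ₂ x)
    {x y : X → Bool} (hx : r x = true) (hy : r y = true) : θ ≤ φ₁ x + φ₂ y := by
  have := hmodels _ (hr.piecewise_eq_true_s4 hx hy)
  rwa [hφ₁.piecewise_eq_left, hφ₂.piecewise_eq_right hr.disjoint] at this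

variable [AddCommMonoid M] [PartialOrder M] [IsOrderedCancelAddMonoid M]
  {φ₁ φ₂ : (X → Bool) → M} {θ : M}

lemma eq_and_eq_of_threshold (hr : IsRectangle X1 X2 r) (hφ₁ : DependsOn φ₁ (X1 : Set X))
    (hφ₂ : DependsOn φ₂ (X2 : Set X)) (hmodels : ∀ x, r x = true → θ ≤ φ₁ x + φ₂ x)
    {x y : X → Bool} (hx : r x = true) (hy : r y = true) (hxθ : φ₁ x + φ₂ x = θ)
    (hyθ : φ₁ y + φ₂ y = θ) : φ₁ x = φ₁ y ∧ φ₂ x = φ₂ y := by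
  have h₁ : φ₁ x = φ₁ y := eq_of_add_eq_of_le_add_swap hxθ hyθ
    (hr.le_add_of_forall_le hφ₁ hφ₂ hmodels hx hy) (hr.le_add_of_forall_le hφ₁ hφ₂ hmodels hy hx)
  exact ⟨h₁, add_left_cancel (a := φ₁ x) (by rw [hxθ, h₁, hyθ])⟩

lemma exists_isRectangle_threshold (hr : IsRectangle X1 X2 r) (hφ₁ : DependsOn φ₁ (X1 : Set X))
    (hφ₂ : DependsOn φ₂ (X2 : Set X)) (hmodels : ∀ x, r x = true → θ ≤ φ₁ x + φ₂ x) :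
    ∃ rstar : (X → Bool) → Bool, IsRectangle X1 X2 rstar ∧
      ∀ x, rstar x = true ↔ (r x = true ∧ φ₁ x + φ₂ x = θ) := by
  classical
  by_cases hex : ∃ x₀, r x₀ = true ∧ φ₁ x₀ + φ₂ x₀ = θ
  · obtain ⟨x₀, hrx₀, hx₀θ⟩ := hex
    refine ⟨_, hr.and_dependsOn (hφ₁.comp fun a => decide (a = φ₁ x₀))
      (hφ₂.comp fun a => decide (a = φ₂ x₀)), fun x => ?_⟩
    simp only [Function.comp_apply, Bool.and_eq_true, decide_eq_true_eq]
    constructor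
    · rintro ⟨⟨hrx, h₁⟩, h₂⟩
      exact ⟨hrx, by rw [h₁, h₂, hx₀θ]⟩
    · rintro ⟨hrx, hxθ⟩
      obtain ⟨h₁, h₂⟩ := hr.eq_and_eq_of_threshold hφ₁ hφ₂ hmodels hrx hrx₀ hxθ hx₀θ
      exact ⟨⟨hrx, h₁⟩, h₂⟩
  · have hfalse : ∀ S : Finset X, DependsOn (fun _ : X → Bool => false) (S : Set X) :=
      fun S => (dependsOn_const false).mono (Set.empty_subset _)
    refine ⟨_, hr.and_dependsOn (hfalse X1) (hfalse X2), fun x => ?_⟩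
    simpa using fun hrx => not_and.mp (not_exists.mp hex x) hrx

end IsRectangle

theorem stmt4_general (m : ℕ) (w : Fin m → ℕ) (θ : ℕ)
    (X1 X2 : Finset (Fin m)) (r : (Fin m → Bool) → Bool)
    (hr : IsRectangle X1 X2 r)
    (hmodels : ∀ x, r x = true → θ ≤ ∑ i, if x i = true then w i else 0) :
    ∃ rstar : (Fin m → Bool) → Bool, IsRectangle X1 X2 rstar ∧
      ∀ x, rstar x = true ↔
        (r x = true ∧ (∑ i, if x i = true then w i else 0) = θ) := by
  simp only [hr.sum_univ_eq_add] at hmodels ⊢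
  exact hr.exists_isRectangle_threshold (dependsOn_sum X1 fun i b => if b = true then w i else 0)
    (dependsOn_sum X2 fun i b => if b = true then w i else 0) hmodels

theorem stmt4 (m : ℕ) (w : Fin m → ℕ) (θ : ℕ) (hw : ∀ i, 0 < w i) (hθ : 0 < θ)
    (X1 X2 : Finset (Fin m)) (r : (Fin m → Bool) → Bool)
    (hr : IsRectangle X1 X2 r)
    (hmodels : ∀ x, r x = true → θ ≤ ∑ i, if x i = true then w i else 0) :
    ∃ rstar : (Fin m → Bool) → Bool, IsRectangle X1 X2 rstar ∧
      ∀ x, rstar x = true ↔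
        (r x = true ∧ (∑ i, if x i = true then w i else 0) = θ) :=
  stmt4_general m w θ X1 X2 r hr hmodels
end

section
/- Let (X1, X2) be a partition of X_n and let x and y be maximal matching assignments. If the mixed assignments (x|X1, y|X2) and (y|X1, x|X2) both have weight exactly 2^(2n) − 1 (with respect to the weights w_{i,j} = 2^(i−1) + 2^(n+j−1)), then both mixed assignments are maximal matching assignments. -/
/-- A maximal matching assignment: the assignment is an `n × n` permutation matrix. -/
def IsMaximalMatching (n : ℕ) (x : Fin n × Fin n → Bool) : Prop :=
  (∀ i : Fin n, ∃! j : Fin n, x (i, j) = true) ∧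
  (∀ j : Fin n, ∃! i : Fin n, x (i, j) = true)

/-- The mixed assignment agreeing with `x` on `X1` and with `y` outside `X1`. -/
def mix {n : ℕ} (X1 : Finset (Fin n × Fin n)) (x y : Fin n × Fin n → Bool) :
    Fin n × Fin n → Bool :=
  fun p => if p ∈ X1 then x p else y p

open Finset

section Counting

variable {n : ℕ}

def rowCount (z : Fin n × Fin n → Bool) (i : Fin n) : ℕ :=
  #{j | z (i, j) = true}

def colCount (z : Fin n × Fin n → Bool) (j : Fin n) : ℕ :=
  #{i | z (i, j) = true}

theorem isMaximalMatching_iff_rowCount_colCount (z : Fin n × Fin n → Bool) :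
    IsMaximalMatching n z ↔ (∀ i, rowCount z i = 1) ∧ ∀ j, colCount z j = 1 := by
  simp only [IsMaximalMatching, rowCount, colCount, Fintype.existsUnique_iff_card_one]

theorem pbWeight_eq_sum_rowCount_add_sum_colCount (z : Fin n × Fin n → Bool) :
    pbWeight n z = ∑ i, rowCount z i * 2 ^ (i : ℕ) + ∑ j, colCount z j * 2 ^ (n + (j : ℕ)) := by
  simp only [pbWeight, ite_add_zero, sum_add_distrib, rowCount, colCount, card_eq_sum_ones,
    sum_mul, sum_filter, boole_mul]
  rw [Fintype.sum_prod_type, Fintype.sum_prod_type_right]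

theorem card_filter_ite_le {α : Type*} (s : Finset α) (p : α → Prop) [DecidablePred p]
    (f g : α → Bool) :
    #{a ∈ s | (if p a then f a else g a) = true} ≤ #{a ∈ s | f a = true} + #{a ∈ s | g a = true} := by
  classical
  exact (card_le_card fun a ha => by
    simp only [mem_filter, mem_union] at ha ⊢
    split_ifs at ha <;> tauto).trans (card_union_le _ _)

theorem rowCount_mix_le (X1 : Finset (Fin n × Fin n)) (x y : Fin n × Fin n → Bool) (i : Fin n) :
    rowCount (mix X1 x y) i ≤ rowCount x i + rowCount y i :=
  card_filter_ite_le _ _ _ _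

theorem colCount_mix_le (X1 : Finset (Fin n × Fin n)) (x y : Fin n × Fin n → Bool) (j : Fin n) :
    colCount (mix X1 x y) j ≤ colCount x j + colCount y j :=
  card_filter_ite_le _ _ _ _

end Counting

theorem eq_one_of_sum_mul_two_pow_eq_two_pow_sub_one :
    ∀ {m : ℕ} (d : Fin m → ℕ), (∀ k, d k ≤ 2) →
      ∑ k, d k * 2 ^ (k : ℕ) = 2 ^ m - 1 → ∀ k, d k = 1
  | 0, _, _, _, k => k.elim0
  | m + 1, d, hd, hsum, k => by
    rw [Fin.sum_univ_succ] at hsum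
    simp only [Fin.val_zero, pow_zero, mul_one, Fin.val_succ, pow_succ, ← mul_assoc,
      ← sum_mul] at hsum
    have hpos : 1 ≤ 2 ^ m := Nat.one_le_two_pow
    have hd0 := hd 0
    -- parity forces the lowest digit to be `1`; the others expand `2 ^ m - 1`
    have hlow : d 0 = 1 := by omega
    have htail : ∑ i : Fin m, d i.succ * 2 ^ (i : ℕ) = 2 ^ m - 1 := by omega
    induction k using Fin.cases with
    | zero => exact hlow
    | succ k =>
      exact eq_one_of_sum_mul_two_pow_eq_two_pow_sub_one (fun i => d i.succ) (fun i => hd _)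
        htail k

theorem isMaximalMatching_of_pbWeight_eq {n : ℕ} (z : Fin n × Fin n → Bool)
    (hw : pbWeight n z = 2 ^ (2 * n) - 1)
    (hrow : ∀ i, rowCount z i ≤ 2) (hcol : ∀ j, colCount z j ≤ 2) :
    IsMaximalMatching n z := by
  set d : Fin (n + n) → ℕ := Fin.append (rowCount z) (colCount z)
  have hsum : ∑ k, d k * 2 ^ (k : ℕ) = 2 ^ (n + n) - 1 := by
    simp only [Fin.sum_univ_add, d, Fin.append_left, Fin.append_right, Fin.val_castAdd,
      Fin.val_natAdd, ← pbWeight_eq_sum_rowCount_add_sum_colCount, hw, two_mul]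
  have hone := eq_one_of_sum_mul_two_pow_eq_two_pow_sub_one d
    (Fin.addCases (by simpa only [d, Fin.append_left] using hrow)
      (by simpa only [d, Fin.append_right] using hcol)) hsum
  rw [isMaximalMatching_iff_rowCount_colCount]
  exact ⟨fun i => by simpa only [d, Fin.append_left] using hone (Fin.castAdd n i),
    fun j => by simpa only [d, Fin.append_right] using hone (Fin.natAdd n j)⟩

theorem isMaximalMatching_mix {n : ℕ} (X1 : Finset (Fin n × Fin n)) {x y : Fin n × Fin n → Bool}
    (hx : IsMaximalMatching n x) (hy : IsMaximalMatching n y)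
    (hw : pbWeight n (mix X1 x y) = 2 ^ (2 * n) - 1) :
    IsMaximalMatching n (mix X1 x y) := by
  rw [isMaximalMatching_iff_rowCount_colCount] at hx hy
  refine isMaximalMatching_of_pbWeight_eq _ hw (fun i => ?_) (fun j => ?_)
  · simpa [hx.1 i, hy.1 i] using rowCount_mix_le X1 x y i
  · simpa [hx.2 j, hy.2 j] using colCount_mix_le X1 x y j

theorem stmt5_general (n : ℕ) (X1 : Finset (Fin n × Fin n))
    (x y : Fin n × Fin n → Bool)
    (hx : IsMaximalMatching n x) (hy : IsMaximalMatching n y)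
    (hxy : pbWeight n (mix X1 x y) = 2 ^ (2 * n) - 1)
    (hyx : pbWeight n (mix X1 y x) = 2 ^ (2 * n) - 1) :
    IsMaximalMatching n (mix X1 x y) ∧ IsMaximalMatching n (mix X1 y x) :=
  ⟨isMaximalMatching_mix X1 hx hy hxy, isMaximalMatching_mix X1 hy hx hyx⟩

theorem stmt5 (n : ℕ) (hn : 1 ≤ n) (X1 X2 : Finset (Fin n × Fin n))
    (hunion : X1 ∪ X2 = Finset.univ) (hinter : X1 ∩ X2 = ∅)
    (x y : Fin n × Fin n → Bool)
    (hx : IsMaximalMatching n x) (hy : IsMaximalMatching n y)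
    (hxy : pbWeight n (mix X1 x y) = 2 ^ (2 * n) - 1)
    (hyx : pbWeight n (mix X1 y x) = 2 ^ (2 * n) - 1) :
    IsMaximalMatching n (mix X1 x y) ∧ IsMaximalMatching n (mix X1 y x) :=
  stmt5_general n X1 x y hx hy hxy hyx
end

section
/- Let r = ρ1 ∧ ρ2 be a satisfiable rectangle with respect to a partition (X1, X2) of X_n such that every model of r is a maximal matching assignment. Define U1 = {i : some model of ρ1 sets some variable x_{i,j} ∈ X1 to 1}, V1 = {j : some model of ρ1 sets some variable x_{i,j} ∈ X1 to 1}, and define U2 and V2 analogously from ρ2 and X2. Then U1 ∩ U2 = ∅, V1 ∩ V2 = ∅, U1 ∪ U2 = {1,…,n}, V1 ∪ V2 = {1,…,n}, and |U1| = |V1| (hence also |U2| = |V2| = n − |U1|). -/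
/-!
Rectangles are closed under mixing: if `y ⊨ ρ₁` and `x ⊨ ρ₂`, the assignment that agrees with `y`
on `X₁` and with `x` on `X₂` is a model of `ρ₁ ∧ ρ₂`, hence a permutation matrix. So once some
model of `ρ₁` puts a one on row `i` inside `X₁`, no model of `ρ₂` may put a one on row `i` outside
`X₁`; the same holds for columns and with the roles of the sides exchanged. This makes the rows
(columns) occupied by the two sides disjoint. Fixing one model `x₀` of the rectangle, the rows and
the columns occupied by side `k` are then exactly the rows and the columns of the ones of `x₀` in
`Xₖ`; these ones sit on distinct rows and distinct columns, which gives the covering and the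
equality of cardinalities.
-/

open Set

namespace DependsOnlyOn

variable {X : Type*} [DecidableEq X] {S T : Finset X} {ρ : (X → Bool) → Bool}

theorem apply_piecewise_left (hρ : DependsOnlyOn S ρ) (y z : X → Bool) :
    ρ (S.piecewise y z) = ρ y :=
  hρ _ _ fun _ hv => S.piecewise_eq_of_mem _ _ hv

theorem apply_piecewise_right (hρ : DependsOnlyOn T ρ) (hST : Disjoint S T) (y z : X → Bool) :
    ρ (S.piecewise y z) = ρ z :=
  hρ _ _ fun _ hv => S.piecewise_eq_of_notMem _ _ (Finset.disjoint_right.mp hST hv)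

end DependsOnlyOn

section OccupiedLines

variable {X L : Type*} {key : X → L} {S₁ S₂ : Finset X} {ρ₁ ρ₂ : (X → Bool) → Bool}

/-- `key` sends a variable to its line, e.g. its row or its column in a grid. -/
def occupiedLines (key : X → L) (S : Finset X) (ρ : (X → Bool) → Bool) : Set L :=
  {ℓ | ∃ v ∈ S, key v = ℓ ∧ ∃ x, ρ x = true ∧ x v = true}

theorem union_occupiedLines (hcover : ∀ v, v ∈ S₁ ∨ v ∈ S₂) {x₀ : X → Bool}
    (h₁ : ρ₁ x₀ = true) (h₂ : ρ₂ x₀ = true) (hsurj : SurjOn key {v | x₀ v = true} univ) :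
    occupiedLines key S₁ ρ₁ ∪ occupiedLines key S₂ ρ₂ = univ := by
  refine eq_univ_of_forall fun ℓ => ?_
  obtain ⟨v, hv, rfl⟩ := hsurj (mem_univ ℓ)
  rcases hcover v with hvS | hvS
  · exact Or.inl ⟨v, hvS, rfl, x₀, h₁, hv⟩
  · exact Or.inr ⟨v, hvS, rfl, x₀, h₂, hv⟩

variable [DecidableEq X]

theorem mem_of_key_eq_of_models (hdisj : Disjoint S₁ S₂) (hρ₁ : DependsOnlyOn S₁ ρ₁)
    (hρ₂ : DependsOnlyOn S₂ ρ₂)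
    (hinj : ∀ x, ρ₁ x = true → ρ₂ x = true → InjOn key {v | x v = true})
    {x y : X → Bool} {v w : X} (hy : ρ₁ y = true) (hw : w ∈ S₁) (hyw : y w = true)
    (hx : ρ₂ x = true) (hxv : x v = true) (hkey : key v = key w) : v ∈ S₁ := by
  by_contra hv
  have hmix₁ : ρ₁ (S₁.piecewise y x) = true := (hρ₁.apply_piecewise_left y x).trans hy
  have hmix₂ : ρ₂ (S₁.piecewise y x) = true := (hρ₂.apply_piecewise_right hdisj y x).trans hx
  have hmixv : S₁.piecewise y x v = true := (S₁.piecewise_eq_of_notMem _ _ hv).trans hxv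
  have hmixw : S₁.piecewise y x w = true := (S₁.piecewise_eq_of_mem _ _ hw).trans hyw
  exact hv (hinj _ hmix₁ hmix₂ hmixv hmixw hkey ▸ hw)

theorem disjoint_occupiedLines (hdisj : Disjoint S₁ S₂) (hρ₁ : DependsOnlyOn S₁ ρ₁)
    (hρ₂ : DependsOnlyOn S₂ ρ₂)
    (hinj : ∀ x, ρ₁ x = true → ρ₂ x = true → InjOn key {v | x v = true}) :
    Disjoint (occupiedLines key S₁ ρ₁) (occupiedLines key S₂ ρ₂) := by
  rw [Set.disjoint_left]
  rintro _ ⟨w, hw, rfl, y, hy, hyw⟩ ⟨v, hv, hkey, x, hx, hxv⟩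
  exact Finset.disjoint_left.mp hdisj
    (mem_of_key_eq_of_models hdisj hρ₁ hρ₂ hinj hy hw hyw hx hxv hkey) hv

theorem occupiedLines_eq_image (hdisj : Disjoint S₁ S₂) (hρ₁ : DependsOnlyOn S₁ ρ₁)
    (hρ₂ : DependsOnlyOn S₂ ρ₂)
    (hinj : ∀ x, ρ₁ x = true → ρ₂ x = true → InjOn key {v | x v = true})
    {x₀ : X → Bool} (h₁ : ρ₁ x₀ = true) (h₂ : ρ₂ x₀ = true)
    (hsurj : SurjOn key {v | x₀ v = true} univ) :
    occupiedLines key S₁ ρ₁ = key '' {v | v ∈ S₁ ∧ x₀ v = true} := by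
  ext ℓ
  constructor
  · rintro ⟨w, hw, rfl, y, hy, hyw⟩
    obtain ⟨v, hv, hkey⟩ := hsurj (mem_univ (key w))
    exact ⟨v, ⟨mem_of_key_eq_of_models hdisj hρ₁ hρ₂ hinj hy hw hyw h₂ hv hkey, hv⟩, hkey⟩
  · rintro ⟨v, ⟨hvS, hv⟩, rfl⟩
    exact ⟨v, hvS, rfl, x₀, h₁, hv⟩

theorem ncard_occupiedLines (hdisj : Disjoint S₁ S₂) (hρ₁ : DependsOnlyOn S₁ ρ₁)
    (hρ₂ : DependsOnlyOn S₂ ρ₂)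
    (hinj : ∀ x, ρ₁ x = true → ρ₂ x = true → InjOn key {v | x v = true})
    {x₀ : X → Bool} (h₁ : ρ₁ x₀ = true) (h₂ : ρ₂ x₀ = true)
    (hsurj : SurjOn key {v | x₀ v = true} univ) :
    (occupiedLines key S₁ ρ₁).ncard = {v | v ∈ S₁ ∧ x₀ v = true}.ncard := by
  rw [occupiedLines_eq_image hdisj hρ₁ hρ₂ hinj h₁ h₂ hsurj]
  exact ((hinj x₀ h₁ h₂).mono fun _ hv => hv.2).ncard_image

end OccupiedLines

namespace IsMaximalMatching

variable {n : ℕ} {x : Fin n × Fin n → Bool}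

theorem injOn_fst (h : IsMaximalMatching n x) : InjOn Prod.fst {v | x v = true} := by
  rintro ⟨i, j⟩ hij ⟨i', j'⟩ hij' (rfl : i = i')
  obtain ⟨_, -, huniq⟩ := h.1 i
  rw [huniq j hij, huniq j' hij']

theorem injOn_snd (h : IsMaximalMatching n x) : InjOn Prod.snd {v | x v = true} := by
  rintro ⟨i, j⟩ hij ⟨i', j'⟩ hij' (rfl : j = j')
  obtain ⟨_, -, huniq⟩ := h.2 j
  rw [huniq i hij, huniq i' hij']

theorem surjOn_fst (h : IsMaximalMatching n x) : SurjOn Prod.fst {v | x v = true} univ :=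
  fun i _ => let ⟨j, hj, _⟩ := h.1 i; ⟨(i, j), hj, rfl⟩

theorem surjOn_snd (h : IsMaximalMatching n x) : SurjOn Prod.snd {v | x v = true} univ :=
  fun j _ => let ⟨i, hi, _⟩ := h.2 j; ⟨(i, j), hi, rfl⟩

end IsMaximalMatching

section Grid

variable {n : ℕ} (S : Finset (Fin n × Fin n)) (ρ : (Fin n × Fin n → Bool) → Bool)

theorem occupiedLines_fst_eq :
    occupiedLines Prod.fst S ρ = {i | ∃ j, (i, j) ∈ S ∧ ∃ x, ρ x = true ∧ x (i, j) = true} := by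
  ext i
  simp [occupiedLines]

theorem occupiedLines_snd_eq :
    occupiedLines Prod.snd S ρ = {j | ∃ i, (i, j) ∈ S ∧ ∃ x, ρ x = true ∧ x (i, j) = true} := by
  ext j
  simp [occupiedLines]

end Grid

theorem stmt12_general (n : ℕ) (X1 X2 : Finset (Fin n × Fin n))
    (hunion : X1 ∪ X2 = Finset.univ) (hinter : X1 ∩ X2 = ∅)
    (ρ1 ρ2 r : (Fin n × Fin n → Bool) → Bool)
    (hρ1 : DependsOnlyOn X1 ρ1) (hρ2 : DependsOnlyOn X2 ρ2)
    (hrdef : ∀ x, r x = (ρ1 x && ρ2 x))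
    (hsat : ∃ x, r x = true)
    (hmodels : ∀ x, r x = true → IsMaximalMatching n x)
    (U1 V1 U2 V2 : Set (Fin n))
    (hU1 : U1 = {i | ∃ j, (i, j) ∈ X1 ∧ ∃ x, ρ1 x = true ∧ x (i, j) = true})
    (hV1 : V1 = {j | ∃ i, (i, j) ∈ X1 ∧ ∃ x, ρ1 x = true ∧ x (i, j) = true})
    (hU2 : U2 = {i | ∃ j, (i, j) ∈ X2 ∧ ∃ x, ρ2 x = true ∧ x (i, j) = true})
    (hV2 : V2 = {j | ∃ i, (i, j) ∈ X2 ∧ ∃ x, ρ2 x = true ∧ x (i, j) = true}) :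
    U1 ∩ U2 = ∅ ∧ V1 ∩ V2 = ∅ ∧
    U1 ∪ U2 = Set.univ ∧ V1 ∪ V2 = Set.univ ∧
    U1.ncard = V1.ncard ∧ U2.ncard = V2.ncard ∧ U2.ncard = n - U1.ncard := by
  have hdisj : Disjoint X1 X2 := Finset.disjoint_iff_inter_eq_empty.mpr hinter
  have hcover (v : Fin n × Fin n) : v ∈ X1 ∨ v ∈ X2 :=
    Finset.mem_union.mp (hunion ▸ Finset.mem_univ v)
  have hmatch (x) (h₁ : ρ1 x = true) (h₂ : ρ2 x = true) : IsMaximalMatching n x :=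
    hmodels x (by simp [hrdef, h₁, h₂])
  obtain ⟨x₀, hx₀⟩ := hsat
  obtain ⟨h₁, h₂⟩ : ρ1 x₀ = true ∧ ρ2 x₀ = true := by simpa [hrdef] using hx₀
  have hrow₁ (x) (h₁ : ρ1 x = true) (h₂ : ρ2 x = true) := (hmatch x h₁ h₂).injOn_fst
  have hcol₁ (x) (h₁ : ρ1 x = true) (h₂ : ρ2 x = true) := (hmatch x h₁ h₂).injOn_snd
  have hrow₂ (x) (h₂ : ρ2 x = true) (h₁ : ρ1 x = true) := (hmatch x h₁ h₂).injOn_fst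
  have hcol₂ (x) (h₂ : ρ2 x = true) (h₁ : ρ1 x = true) := (hmatch x h₁ h₂).injOn_snd
  have hrows := (hmatch x₀ h₁ h₂).surjOn_fst
  have hcols := (hmatch x₀ h₁ h₂).surjOn_snd
  subst hU1 hV1 hU2 hV2
  simp only [← occupiedLines_fst_eq, ← occupiedLines_snd_eq, ← disjoint_iff_inter_eq_empty]
  have hUdisj := disjoint_occupiedLines hdisj hρ1 hρ2 hrow₁
  have hUunion := union_occupiedLines hcover h₁ h₂ hrows
  refine ⟨hUdisj, disjoint_occupiedLines hdisj hρ1 hρ2 hcol₁, hUunion,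
    union_occupiedLines hcover h₁ h₂ hcols, ?_, ?_, ?_⟩
  · rw [ncard_occupiedLines hdisj hρ1 hρ2 hrow₁ h₁ h₂ hrows,
      ncard_occupiedLines hdisj hρ1 hρ2 hcol₁ h₁ h₂ hcols]
  · rw [ncard_occupiedLines hdisj.symm hρ2 hρ1 hrow₂ h₂ h₁ hrows,
      ncard_occupiedLines hdisj.symm hρ2 hρ1 hcol₂ h₂ h₁ hcols]
  · have hsum := ncard_union_eq hUdisj
    rw [hUunion, ncard_univ, Nat.card_fin] at hsum
    omega

theorem stmt12 (n : ℕ) (hn : 1 ≤ n) (X1 X2 : Finset (Fin n × Fin n))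
    (hunion : X1 ∪ X2 = Finset.univ) (hinter : X1 ∩ X2 = ∅)
    (ρ1 ρ2 r : (Fin n × Fin n → Bool) → Bool)
    (hρ1 : DependsOnlyOn X1 ρ1) (hρ2 : DependsOnlyOn X2 ρ2)
    (hrdef : ∀ x, r x = (ρ1 x && ρ2 x))
    (hsat : ∃ x, r x = true)
    (hmodels : ∀ x, r x = true → IsMaximalMatching n x)
    (U1 V1 U2 V2 : Set (Fin n))
    (hU1 : U1 = {i | ∃ j, (i, j) ∈ X1 ∧ ∃ x, ρ1 x = true ∧ x (i, j) = true})
    (hV1 : V1 = {j | ∃ i, (i, j) ∈ X1 ∧ ∃ x, ρ1 x = true ∧ x (i, j) = true})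
    (hU2 : U2 = {i | ∃ j, (i, j) ∈ X2 ∧ ∃ x, ρ2 x = true ∧ x (i, j) = true})
    (hV2 : V2 = {j | ∃ i, (i, j) ∈ X2 ∧ ∃ x, ρ2 x = true ∧ x (i, j) = true}) :
    U1 ∩ U2 = ∅ ∧ V1 ∩ V2 = ∅ ∧
    U1 ∪ U2 = Set.univ ∧ V1 ∪ V2 = Set.univ ∧
    U1.ncard = V1.ncard ∧ U2.ncard = V2.ncard ∧ U2.ncard = n - U1.ncard :=
  stmt12_general n X1 X2 hunion hinter ρ1 ρ2 r hρ1 hρ2 hrdef hsat hmodels U1 V1 U2 V2 hU1 hV1 hU2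
    hV2
end
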